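/- arXiv:2003.04522 — 2 statements merged into one kernel-verified Lean document; each statement's English description precedes it below -/
import Mathlib

section
/- Let A = [A_{ij}]_{i,j=1}^n be an n×n block positive definite complex matrix with p×p blocks and let B = [B_{ij}]_{i,j=1}^n be an n×n block positive definite complex matrix with q×q blocks. Then det(A*B) ≥ (det A)^q · (det B)^p · ∏_{μ=2}^n ( (det A_{μμ} · det A_{μ-1} / det A_μ)^q + (det B_{μμ} · det B_{μ-1} / det B_μ)^p − 1 ), where A*B is the Khatri-Rao product and A_μ, B_μ denote the μ-th leading principal block submatrices. -/
open scoped ComplexOrder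

/-- The `m`-th leading principal block submatrix `A_m = [A_{ij}]_{i,j=1}^m` of an
`n×n` block matrix `A` with `p×p` blocks. -/
def leadBlock {n p : ℕ} (A : Matrix (Fin n × Fin p) (Fin n × Fin p) ℂ)
    (m : ℕ) (h : m ≤ n) : Matrix (Fin m × Fin p) (Fin m × Fin p) ℂ :=
  A.submatrix (Prod.map (Fin.castLE h) id) (Prod.map (Fin.castLE h) id)

/-- The `k`-th diagonal block `A_{kk}` of an `n×n` block matrix `A` with `p×p` blocks. -/
def diagBlock {n p : ℕ} (A : Matrix (Fin n × Fin p) (Fin n × Fin p) ℂ)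
    (k : Fin n) : Matrix (Fin p) (Fin p) ℂ :=
  fun a b => A (k, a) (k, b)

/-- The Khatri-Rao product `A * B = [A_{ij} ⊗ B_{ij}]_{i,j=1}^n` of an `n×n` block
matrix `A` with `p×p` blocks and an `n×n` block matrix `B` with `q×q` blocks. -/
def khatriRao {n p q : ℕ} (A : Matrix (Fin n × Fin p) (Fin n × Fin p) ℂ)
    (B : Matrix (Fin n × Fin q) (Fin n × Fin q) ℂ) :
    Matrix (Fin n × (Fin p × Fin q)) (Fin n × (Fin p × Fin q)) ℂ :=
  fun x y => A (x.1, x.2.1) (y.1, y.2.1) * B (x.1, x.2.2) (y.1, y.2.2)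

/-!
Induct on the number of block rows. Splitting off the last block row and column,
`A = [[A', a], [a*, α]]`, let `S = α - a* A'⁻¹ a` be the Schur complement, so that
`det A = det A' · det S`. Subtracting `S` from the last diagonal block of `A` (and likewise `R`
from that of `B`) leaves positive semidefinite matrices whose Khatri-Rao product agrees with
`A * B` except in the last diagonal block, where it falls short by
`T = α ⊗ β - (α - S) ⊗ (β - R)`; Schur complements then give `det (A * B) ≥ det (A' * B') · det T`.
A congruence turns `S`, `α` into `1`, `1 + P` (and `R`, `β` into `1`, `1 + Q`), and diagonalising
`P` and `Q` reduces the bound `det T ≥ det S^q det R^p ((det α / det S)^q + (det β / det R)^p - 1)`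
to the scalar inequality `∏ (1 + aᵢ + bᵢ) + 1 ≥ ∏ (1 + aᵢ) + ∏ (1 + bᵢ)` for `aᵢ, bᵢ ≥ 0`.
-/

open Matrix
open scoped Kronecker MatrixOrder

theorem Finset.prod_one_add_add_prod_one_add_le {ι R : Type*} [CommSemiring R] [PartialOrder R]
    [IsOrderedRing R] (s : Finset ι) {a b : ι → R} (ha : ∀ i ∈ s, 0 ≤ a i)
    (hb : ∀ i ∈ s, 0 ≤ b i) :
    ∏ i ∈ s, (1 + a i) + ∏ i ∈ s, (1 + b i) ≤ ∏ i ∈ s, (1 + a i + b i) + 1 := by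
  induction s using Finset.cons_induction with
  | empty => simp
  | cons j s hj ih =>
    simp only [Finset.mem_cons, forall_eq_or_imp] at ha hb
    have ha_le : ∏ i ∈ s, (1 + a i) ≤ ∏ i ∈ s, (1 + a i + b i) :=
      Finset.prod_le_prod (fun i hi => add_nonneg zero_le_one (ha.2 i hi))
        (fun i hi => le_add_of_nonneg_right (hb.2 i hi))
    have hb_le : ∏ i ∈ s, (1 + b i) ≤ ∏ i ∈ s, (1 + a i + b i) :=
      Finset.prod_le_prod (fun i hi => add_nonneg zero_le_one (hb.2 i hi))
        (fun i hi => by rw [add_right_comm]; exact le_add_of_nonneg_right (ha.2 i hi))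
    simp only [Finset.prod_cons]
    calc (1 + a j) * ∏ i ∈ s, (1 + a i) + (1 + b j) * ∏ i ∈ s, (1 + b i)
        = (∏ i ∈ s, (1 + a i) + ∏ i ∈ s, (1 + b i)) +
            (a j * ∏ i ∈ s, (1 + a i) + b j * ∏ i ∈ s, (1 + b i)) := by ring
      _ ≤ (∏ i ∈ s, (1 + a i + b i) + 1) +
            (a j * ∏ i ∈ s, (1 + a i + b i) + b j * ∏ i ∈ s, (1 + a i + b i)) :=
        add_le_add (ih ha.2 hb.2) (add_le_add (mul_le_mul_of_nonneg_left ha_le ha.1)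
          (mul_le_mul_of_nonneg_left hb_le hb.1))
      _ = (1 + a j + b j) * ∏ i ∈ s, (1 + a i + b i) + 1 := by ring

namespace Matrix

variable {𝕜 : Type*} [RCLike 𝕜] {l m n : Type*}

section Kronecker

variable [Fintype m] [Fintype n]

theorem kronecker_mul_mul_star (u a : Matrix m m 𝕜) (v b : Matrix n n 𝕜) :
    (u * a * star u) ⊗ₖ (v * b * star v) = (u ⊗ₖ v) * (a ⊗ₖ b) * star (u ⊗ₖ v) := by
  simp only [mul_kronecker_mul, star_eq_conjTranspose, conjTranspose_kronecker]

theorem PosDef.kronecker_sub_kronecker {S α : Matrix m m 𝕜} {R β : Matrix n n 𝕜}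
    (hS : S.PosDef) (hR : R.PosDef) (hα : (α - S).PosSemidef) (hβ : (β - R).PosSemidef) :
    (α ⊗ₖ β - (α - S) ⊗ₖ (β - R)).PosDef := by
  have h : α ⊗ₖ β - (α - S) ⊗ₖ (β - R) = (α - S) ⊗ₖ R + S ⊗ₖ (β - R) + S ⊗ₖ R := by
    ext ⟨i, j⟩ ⟨i', j'⟩
    simp only [sub_apply, add_apply, kroneckerMap_apply]
    ring
  rw [h]
  exact PosDef.posSemidef_add ((hα.kronecker hR.posSemidef).add (hS.posSemidef.kronecker hβ))
    (hS.kronecker hR)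

variable [DecidableEq m] [DecidableEq n]

theorem det_mul_mul_star_of_mem_unitary {u : Matrix m m 𝕜} (hu : u ∈ unitary (Matrix m m 𝕜))
    (D : Matrix m m 𝕜) : (u * D * star u).det = D.det := by
  rw [det_mul, det_mul, mul_right_comm, ← det_mul, Unitary.mul_star_self_of_mem hu, det_one,
    one_mul]

theorem IsHermitian.eq_mul_diagonal_mul_star {P : Matrix m m 𝕜} (hP : P.IsHermitian) :
    P = (hP.eigenvectorUnitary : Matrix m m 𝕜) * diagonal (fun i => (hP.eigenvalues i : 𝕜)) *
      star (hP.eigenvectorUnitary : Matrix m m 𝕜) :=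
  hP.spectral_theorem

theorem IsHermitian.det_one_add {P : Matrix m m 𝕜} (hP : P.IsHermitian) :
    (1 + P).det = ∏ i, (1 + (hP.eigenvalues i : 𝕜)) := by
  conv_lhs =>
    rw [hP.spectral_theorem, ← map_one (Unitary.conjStarAlgAut 𝕜 _ hP.eigenvectorUnitary),
      ← map_add, Unitary.conjStarAlgAut_apply]
  rw [det_mul_mul_star_of_mem_unitary hP.eigenvectorUnitary.2, ← diagonal_one, diagonal_add,
    det_diagonal]
  rfl

theorem IsHermitian.det_one_add_kronecker_add {P : Matrix m m 𝕜} {Q : Matrix n n 𝕜}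
    (hP : P.IsHermitian) (hQ : Q.IsHermitian) :
    (1 + P ⊗ₖ (1 : Matrix n n 𝕜) + (1 : Matrix m m 𝕜) ⊗ₖ Q).det =
      ∏ ij : m × n, (1 + (hP.eigenvalues ij.1 : 𝕜) + hQ.eigenvalues ij.2) := by
  set U := (hP.eigenvectorUnitary : Matrix m m 𝕜)
  set V := (hQ.eigenvectorUnitary : Matrix n n 𝕜)
  set D := diagonal (fun i => (hP.eigenvalues i : 𝕜))
  set E := diagonal (fun j => (hQ.eigenvalues j : 𝕜))
  have hU : U * 1 * star U = 1 := by
    rw [mul_one, Unitary.mul_star_self_of_mem hP.eigenvectorUnitary.2]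
  have hV : V * 1 * star V = 1 := by
    rw [mul_one, Unitary.mul_star_self_of_mem hQ.eigenvectorUnitary.2]
  have hUV : (U ⊗ₖ V) * 1 * star (U ⊗ₖ V) = 1 := by
    rw [← one_kronecker_one, ← kronecker_mul_mul_star, hU, hV]
  have hdiag : 1 + P ⊗ₖ (1 : Matrix n n 𝕜) + (1 : Matrix m m 𝕜) ⊗ₖ Q =
      (U ⊗ₖ V) *
        diagonal (fun ij : m × n => 1 + (hP.eigenvalues ij.1 : 𝕜) + hQ.eigenvalues ij.2) *
          star (U ⊗ₖ V) := calc
    _ = (U ⊗ₖ V) * 1 * star (U ⊗ₖ V) + (U * D * star U) ⊗ₖ (V * 1 * star V) +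
          (U * 1 * star U) ⊗ₖ (V * E * star V) := by
      rw [hUV, hU, hV, ← hP.eq_mul_diagonal_mul_star, ← hQ.eq_mul_diagonal_mul_star]
    _ = (U ⊗ₖ V) * (1 + D ⊗ₖ 1 + 1 ⊗ₖ E) * star (U ⊗ₖ V) := by
      simp only [kronecker_mul_mul_star, Matrix.mul_add, Matrix.add_mul]
    _ = _ := by
      congr 2
      simp only [D, E, ← diagonal_one, diagonal_kronecker_diagonal, diagonal_add, one_mul,
        mul_one]
  rw [hdiag, det_mul_mul_star_of_mem_unitary (kronecker_mem_unitary hP.eigenvectorUnitary.2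
    hQ.eigenvectorUnitary.2), det_diagonal]

theorem PosSemidef.one_le_det_one_add {P : Matrix m m 𝕜} (hP : P.PosSemidef) :
    1 ≤ (1 + P).det := by
  rw [hP.1.det_one_add]
  exact Finset.one_le_prod fun i _ =>
    le_add_of_nonneg_right (RCLike.ofReal_nonneg.mpr (hP.eigenvalues_nonneg i))

theorem PosSemidef.det_one_add_pow_add_le {P : Matrix m m 𝕜} {Q : Matrix n n 𝕜}
    (hP : P.PosSemidef) (hQ : Q.PosSemidef) :
    (1 + P).det ^ Fintype.card n + (1 + Q).det ^ Fintype.card m ≤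
      (1 + P ⊗ₖ (1 : Matrix n n 𝕜) + (1 : Matrix m m 𝕜) ⊗ₖ Q).det + 1 := by
  have hP_pow :
      (1 + P).det ^ Fintype.card n = ∏ ij : m × n, (1 + (hP.1.eigenvalues ij.1 : 𝕜)) := by
    simp [hP.1.det_one_add, Fintype.prod_prod_type, Finset.prod_pow]
  have hQ_pow :
      (1 + Q).det ^ Fintype.card m = ∏ ij : m × n, (1 + (hQ.1.eigenvalues ij.2 : 𝕜)) := by
    simp [hQ.1.det_one_add, Fintype.prod_prod_type]
  rw [hP_pow, hQ_pow, hP.1.det_one_add_kronecker_add hQ.1]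
  exact Finset.prod_one_add_add_prod_one_add_le _
    (fun ij _ => RCLike.ofReal_nonneg.mpr (hP.eigenvalues_nonneg ij.1))
    (fun ij _ => RCLike.ofReal_nonneg.mpr (hQ.eigenvalues_nonneg ij.2))

theorem PosDef.exists_eq_star_mul_one_add_mul {S α : Matrix m m 𝕜} (hS : S.PosDef)
    (h : (α - S).PosSemidef) :
    ∃ s P : Matrix m m 𝕜, P.PosSemidef ∧ S = star s * s ∧ α = star s * (1 + P) * s := by
  obtain ⟨s, rfl⟩ := CStarAlgebra.nonneg_iff_eq_star_mul_self.mp hS.posSemidef.nonneg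
  have hs : IsUnit s.det := by
    have : IsUnit ((star s).det * s.det) := by
      rw [← det_mul]; exact (isUnit_iff_isUnit_det _).mp hS.isUnit
    exact isUnit_of_mul_isUnit_right this
  refine ⟨s, star s⁻¹ * (α - star s * s) * s⁻¹, ?_, rfl, ?_⟩
  · simpa only [star_eq_conjTranspose] using h.conjTranspose_mul_mul_same s⁻¹
  · have hinv : s⁻¹ * s = 1 := nonsing_inv_mul s hs
    have hinv' : star s * star s⁻¹ = 1 := by rw [← star_mul, hinv, star_one]
    calc α = star s * s + star s * star s⁻¹ * (α - star s * s) * (s⁻¹ * s) := by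
          rw [hinv, hinv', one_mul, mul_one, add_sub_cancel]
      _ = star s * (1 + star s⁻¹ * (α - star s * s) * s⁻¹) * s := by noncomm_ring

theorem det_div_det_eq_det_one_add {S α s P : Matrix m m 𝕜} (hS : S.det ≠ 0)
    (hSs : S = star s * s) (hαs : α = star s * (1 + P) * s) : α.det / S.det = (1 + P).det := by
  rw [show α.det = S.det * (1 + P).det by rw [hαs, hSs, det_mul, det_mul, det_mul]; ring,
    mul_div_cancel_left₀ _ hS]

theorem PosDef.one_le_det_div_det {S α : Matrix m m 𝕜} (hS : S.PosDef)
    (h : (α - S).PosSemidef) : 1 ≤ α.det / S.det := by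
  obtain ⟨s, P, hP, hSs, hαs⟩ := hS.exists_eq_star_mul_one_add_mul h
  rw [det_div_det_eq_det_one_add hS.det_pos.ne' hSs hαs]
  exact hP.one_le_det_one_add

theorem PosDef.det_le_det_add {Q P : Matrix m m 𝕜} (hQ : Q.PosDef) (hP : P.PosSemidef) :
    Q.det ≤ (Q + P).det :=
  (one_le_div₀ hQ.det_pos).mp (hQ.one_le_det_div_det (by rwa [add_sub_cancel_left]))

theorem le_det_kronecker_sub_kronecker {S α : Matrix m m 𝕜} {R β : Matrix n n 𝕜}
    (hS : S.PosDef) (hR : R.PosDef) (hα : (α - S).PosSemidef) (hβ : (β - R).PosSemidef) :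
    S.det ^ Fintype.card n * R.det ^ Fintype.card m *
        ((α.det / S.det) ^ Fintype.card n + (β.det / R.det) ^ Fintype.card m - 1) ≤
      (α ⊗ₖ β - (α - S) ⊗ₖ (β - R)).det := by
  obtain ⟨s, P, hP, hSs, hαs⟩ := hS.exists_eq_star_mul_one_add_mul hα
  obtain ⟨r, Q, hQ, hRr, hβr⟩ := hR.exists_eq_star_mul_one_add_mul hβ
  have hαS : α - S = star s * P * s := by rw [hαs, hSs]; noncomm_ring
  have hβR : β - R = star r * Q * r := by rw [hβr, hRr]; noncomm_ring
  have hconj : α ⊗ₖ β - (α - S) ⊗ₖ (β - R) =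
      (star s ⊗ₖ star r) * (1 + P ⊗ₖ (1 : Matrix n n 𝕜) + (1 : Matrix m m 𝕜) ⊗ₖ Q) *
        (s ⊗ₖ r) := by
    rw [hαS, hβR, hαs, hβr]
    simp only [mul_kronecker_mul]
    rw [← Matrix.sub_mul, ← Matrix.mul_sub]
    congr 2
    simp only [add_kronecker, kronecker_add, one_kronecker_one]
    abel
  have hscale : (star s ⊗ₖ star r).det * (s ⊗ₖ r).det =
      S.det ^ Fintype.card n * R.det ^ Fintype.card m := by
    rw [← det_mul, ← mul_kronecker_mul, ← hSs, ← hRr, det_kronecker]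
  calc _ ≤ S.det ^ Fintype.card n * R.det ^ Fintype.card m *
        (1 + P ⊗ₖ (1 : Matrix n n 𝕜) + (1 : Matrix m m 𝕜) ⊗ₖ Q).det := by
        rw [det_div_det_eq_det_one_add hS.det_pos.ne' hSs hαs,
          det_div_det_eq_det_one_add hR.det_pos.ne' hRr hβr]
        exact mul_le_mul_of_nonneg_left (sub_le_iff_le_add.mpr (hP.det_one_add_pow_add_le hQ))
          (mul_nonneg (pow_nonneg hS.det_pos.le _) (pow_nonneg hR.det_pos.le _))
    _ = _ := by rw [hconj, det_mul, det_mul, ← hscale]; ring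

end Kronecker

section SchurComplement

theorem toBlocks₁₁_add_fromBlocks_zero {R : Type*} [AddZeroClass R]
    (M : Matrix (l ⊕ m) (l ⊕ m) R) (D : Matrix m m R) :
    (M + fromBlocks 0 0 0 D).toBlocks₁₁ = M.toBlocks₁₁ := by
  ext i j
  simp [toBlocks₁₁]

theorem IsHermitian.toBlocks₂₁ {M : Matrix (l ⊕ m) (l ⊕ m) 𝕜} (hM : M.IsHermitian) :
    M.toBlocks₂₁ = M.toBlocks₁₂ᴴ := by
  ext i j
  exact (hM.apply _ _).symm

theorem PosDef.toBlocks₁₁ {M : Matrix (l ⊕ m) (l ⊕ m) 𝕜} (hM : M.PosDef) :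
    M.toBlocks₁₁.PosDef :=
  hM.submatrix Sum.inl_injective

variable [Fintype l] [DecidableEq l]

noncomputable def schurCompl {R : Type*} [CommRing R] (M : Matrix (l ⊕ m) (l ⊕ m) R) :
    Matrix m m R :=
  M.toBlocks₂₂ - M.toBlocks₂₁ * M.toBlocks₁₁⁻¹ * M.toBlocks₁₂

theorem schurCompl_add_fromBlocks_zero {R : Type*} [CommRing R]
    (M : Matrix (l ⊕ m) (l ⊕ m) R) (D : Matrix m m R) :
    (M + fromBlocks 0 0 0 D).schurCompl = M.schurCompl + D := by
  conv_lhs => rw [← fromBlocks_toBlocks M, fromBlocks_add]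
  simp only [schurCompl, toBlocks_fromBlocks₁₁, toBlocks_fromBlocks₁₂, toBlocks_fromBlocks₂₁,
    toBlocks_fromBlocks₂₂, add_zero]
  abel

variable [Fintype m]

theorem posSemidef_iff_posSemidef_schurCompl {M : Matrix (l ⊕ m) (l ⊕ m) 𝕜}
    (hM : M.IsHermitian) (h₁₁ : M.toBlocks₁₁.PosDef) : M.PosSemidef ↔ M.schurCompl.PosSemidef := by
  have := h₁₁.isUnit.invertible
  conv_lhs => rw [← fromBlocks_toBlocks M, hM.toBlocks₂₁]
  rw [schurCompl, hM.toBlocks₂₁]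
  exact PosDef.fromBlocks₁₁ _ _ h₁₁

variable [DecidableEq m]

theorem det_eq_det_toBlocks₁₁_mul_det_schurCompl {R : Type*} [CommRing R]
    {M : Matrix (l ⊕ m) (l ⊕ m) R} (h : IsUnit M.toBlocks₁₁) :
    M.det = M.toBlocks₁₁.det * M.schurCompl.det := by
  have := h.invertible
  conv_lhs => rw [← fromBlocks_toBlocks M]
  rw [det_fromBlocks₁₁, invOf_eq_nonsing_inv, schurCompl]

theorem PosDef.schurCompl {M : Matrix (l ⊕ m) (l ⊕ m) 𝕜} (hM : M.PosDef) :
    M.schurCompl.PosDef := by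
  refine ((posSemidef_iff_posSemidef_schurCompl hM.1 hM.toBlocks₁₁).mp hM.posSemidef
    |>.posDef_iff_det_ne_zero).mpr fun h => hM.det_pos.ne' ?_
  rw [det_eq_det_toBlocks₁₁_mul_det_schurCompl hM.toBlocks₁₁.isUnit, h, mul_zero]

theorem PosDef.posSemidef_sub_fromBlocks_schurCompl {M : Matrix (l ⊕ m) (l ⊕ m) 𝕜}
    (hM : M.PosDef) : (M - fromBlocks 0 0 0 M.schurCompl).PosSemidef := by
  have hF : (fromBlocks 0 0 0 M.schurCompl : Matrix (l ⊕ m) (l ⊕ m) 𝕜).IsHermitian :=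
    IsHermitian.fromBlocks isHermitian_zero (by simp) hM.schurCompl.1
  have h₁₁ := toBlocks₁₁_add_fromBlocks_zero (M - fromBlocks 0 0 0 M.schurCompl) M.schurCompl
  have hS := schurCompl_add_fromBlocks_zero (M - fromBlocks 0 0 0 M.schurCompl) M.schurCompl
  rw [sub_add_cancel] at h₁₁ hS
  rw [posSemidef_iff_posSemidef_schurCompl (hM.1.sub hF) (h₁₁ ▸ hM.toBlocks₁₁),
    add_eq_right.mp hS.symm]
  exact .zero

theorem PosDef.posSemidef_toBlocks₂₂_sub_schurCompl {M : Matrix (l ⊕ m) (l ⊕ m) 𝕜}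
    (hM : M.PosDef) : (M.toBlocks₂₂ - M.schurCompl).PosSemidef :=
  hM.posSemidef_sub_fromBlocks_schurCompl.submatrix Sum.inr

theorem PosSemidef.det_toBlocks₁₁_mul_det_le_det_add_fromBlocks
    {N : Matrix (l ⊕ m) (l ⊕ m) 𝕜} {T : Matrix m m 𝕜} (hN : N.PosSemidef)
    (h₁₁ : N.toBlocks₁₁.PosDef) (hT : T.PosDef) :
    N.toBlocks₁₁.det * T.det ≤ (N + fromBlocks 0 0 0 T).det := by
  have h₁₁' := toBlocks₁₁_add_fromBlocks_zero N T
  rw [det_eq_det_toBlocks₁₁_mul_det_schurCompl (h₁₁' ▸ h₁₁.isUnit), h₁₁',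
    schurCompl_add_fromBlocks_zero, add_comm]
  exact mul_le_mul_of_nonneg_left
    (hT.det_le_det_add ((posSemidef_iff_posSemidef_schurCompl hN.1 h₁₁).mp hN)) h₁₁.det_pos.le

end SchurComplement

end Matrix

def lastBlockEquiv (n : ℕ) (κ : Type*) : (Fin n × κ) ⊕ κ ≃ Fin (n + 1) × κ where
  toFun := Sum.elim (fun x => (x.1.castSucc, x.2)) (fun a => (Fin.last n, a))
  invFun x := Fin.lastCases (Sum.inr x.2) (fun i => Sum.inl (i, x.2)) x.1
  left_inv := by rintro (⟨i, a⟩ | a) <;> simp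
  right_inv := by
    rintro ⟨i, a⟩
    induction i using Fin.lastCases <;> simp

theorem submatrix_lastBlockEquiv_single_last_kronecker {R : Type*} [MulZeroOneClass R] {n : ℕ}
    {κ : Type*} (D : Matrix κ κ R) :
    (single (Fin.last n) (Fin.last n) (1 : R) ⊗ₖ D).submatrix (lastBlockEquiv n κ)
      (lastBlockEquiv n κ) = fromBlocks 0 0 0 D := by
  ext (⟨i, a⟩ | a) (⟨j, b⟩ | b) <;>
    simp [lastBlockEquiv, (Fin.castSucc_ne_last _).symm]

section BlockMatrix

variable {n p q : ℕ}

theorem khatriRao_eq_submatrix_kronecker (A : Matrix (Fin n × Fin p) (Fin n × Fin p) ℂ)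
    (B : Matrix (Fin n × Fin q) (Fin n × Fin q) ℂ) :
    khatriRao A B = (A ⊗ₖ B).submatrix (fun x => ((x.1, x.2.1), (x.1, x.2.2)))
      (fun x => ((x.1, x.2.1), (x.1, x.2.2))) :=
  rfl

theorem posSemidef_khatriRao {A : Matrix (Fin n × Fin p) (Fin n × Fin p) ℂ}
    {B : Matrix (Fin n × Fin q) (Fin n × Fin q) ℂ} (hA : A.PosSemidef) (hB : B.PosSemidef) :
    (khatriRao A B).PosSemidef := by
  rw [khatriRao_eq_submatrix_kronecker]
  exact (hA.kronecker hB).submatrix _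

theorem posDef_khatriRao {A : Matrix (Fin n × Fin p) (Fin n × Fin p) ℂ}
    {B : Matrix (Fin n × Fin q) (Fin n × Fin q) ℂ} (hA : A.PosDef) (hB : B.PosDef) :
    (khatriRao A B).PosDef := by
  rw [khatriRao_eq_submatrix_kronecker]
  refine (hA.kronecker hB).submatrix ?_
  rintro ⟨i, a, b⟩ ⟨j, c, d⟩ h
  obtain ⟨⟨rfl, rfl⟩, -, rfl⟩ := Prod.ext_iff.mp h
  rfl

theorem posDef_leadBlock {A : Matrix (Fin n × Fin p) (Fin n × Fin p) ℂ} (hA : A.PosDef)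
    (m : ℕ) (h : m ≤ n) : (leadBlock A m h).PosDef :=
  hA.submatrix ((Fin.castLE_injective h).prodMap Function.injective_id)

theorem posDef_diagBlock {A : Matrix (Fin n × Fin p) (Fin n × Fin p) ℂ} (hA : A.PosDef)
    (k : Fin n) : (diagBlock A k).PosDef :=
  hA.submatrix (Prod.mk_right_injective k)

theorem khatriRao_eq_khatriRao_sub_add (A : Matrix (Fin n × Fin p) (Fin n × Fin p) ℂ)
    (B : Matrix (Fin n × Fin q) (Fin n × Fin q) ℂ) (k : Fin n) (S : Matrix (Fin p) (Fin p) ℂ)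
    (R : Matrix (Fin q) (Fin q) ℂ) :
    khatriRao A B =
      khatriRao (A - single k k 1 ⊗ₖ S) (B - single k k 1 ⊗ₖ R) +
        single k k 1 ⊗ₖ
          (diagBlock A k ⊗ₖ diagBlock B k - (diagBlock A k - S) ⊗ₖ (diagBlock B k - R)) := by
  ext ⟨i, a, b⟩ ⟨j, c, d⟩
  simp only [khatriRao, Matrix.add_apply, Matrix.sub_apply, kroneckerMap_apply, single_apply,
    diagBlock]
  split_ifs with h
  · obtain ⟨rfl, rfl⟩ := h
    ring
  · ring

theorem leadBlock_sub_single_last_kronecker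
    (A : Matrix (Fin (n + 1) × Fin p) (Fin (n + 1) × Fin p) ℂ) (S : Matrix (Fin p) (Fin p) ℂ) :
    leadBlock (A - single (Fin.last n) (Fin.last n) 1 ⊗ₖ S) n n.le_succ =
      leadBlock A n n.le_succ := by
  ext ⟨i, a⟩ ⟨j, b⟩
  simp [leadBlock, Fin.ext_iff, i.isLt.ne']

noncomputable def lastSchurCompl (A : Matrix (Fin (n + 1) × Fin p) (Fin (n + 1) × Fin p) ℂ) :
    Matrix (Fin p) (Fin p) ℂ :=
  (A.submatrix (lastBlockEquiv n (Fin p)) (lastBlockEquiv n (Fin p))).schurCompl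

variable {A : Matrix (Fin (n + 1) × Fin p) (Fin (n + 1) × Fin p) ℂ}
  {B : Matrix (Fin (n + 1) × Fin q) (Fin (n + 1) × Fin q) ℂ}

theorem det_eq_det_leadBlock_mul_det_lastSchurCompl (hA : A.PosDef) :
    A.det = (leadBlock A n n.le_succ).det * (lastSchurCompl A).det := by
  rw [← det_submatrix_equiv_self (lastBlockEquiv n (Fin p)) A,
    det_eq_det_toBlocks₁₁_mul_det_schurCompl
      (M := A.submatrix (lastBlockEquiv n (Fin p)) (lastBlockEquiv n (Fin p)))
      (posDef_leadBlock hA n n.le_succ).isUnit]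
  rfl

theorem posDef_lastSchurCompl (hA : A.PosDef) : (lastSchurCompl A).PosDef :=
  (hA.submatrix (lastBlockEquiv n (Fin p)).injective).schurCompl

theorem posSemidef_diagBlock_last_sub_lastSchurCompl (hA : A.PosDef) :
    (diagBlock A (Fin.last n) - lastSchurCompl A).PosSemidef :=
  (hA.submatrix (lastBlockEquiv n (Fin p)).injective).posSemidef_toBlocks₂₂_sub_schurCompl

theorem posSemidef_sub_single_last_kronecker_lastSchurCompl (hA : A.PosDef) :
    (A - single (Fin.last n) (Fin.last n) 1 ⊗ₖ lastSchurCompl A).PosSemidef := by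
  rw [← posSemidef_submatrix_equiv (lastBlockEquiv n (Fin p)), submatrix_sub, Pi.sub_apply,
    Pi.sub_apply, submatrix_lastBlockEquiv_single_last_kronecker]
  exact (hA.submatrix (lastBlockEquiv n (Fin p)).injective).posSemidef_sub_fromBlocks_schurCompl

theorem det_khatriRao_leadBlock_mul_det_le (hA : A.PosDef) (hB : B.PosDef) :
    (khatriRao (leadBlock A n n.le_succ) (leadBlock B n n.le_succ)).det *
        (diagBlock A (Fin.last n) ⊗ₖ diagBlock B (Fin.last n) -
          (diagBlock A (Fin.last n) - lastSchurCompl A) ⊗ₖ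
            (diagBlock B (Fin.last n) - lastSchurCompl B)).det ≤
      (khatriRao A B).det := by
  set e := lastBlockEquiv n (Fin p × Fin q)
  set K := khatriRao (A - single (Fin.last n) (Fin.last n) 1 ⊗ₖ lastSchurCompl A)
    (B - single (Fin.last n) (Fin.last n) 1 ⊗ₖ lastSchurCompl B)
  have hK₁₁ : (K.submatrix e e).toBlocks₁₁ =
      khatriRao (leadBlock A n n.le_succ) (leadBlock B n n.le_succ) := by
    rw [← leadBlock_sub_single_last_kronecker A (lastSchurCompl A),
      ← leadBlock_sub_single_last_kronecker B (lastSchurCompl B)]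
    rfl
  have hK : (K.submatrix e e).PosSemidef :=
    (posSemidef_khatriRao (posSemidef_sub_single_last_kronecker_lastSchurCompl hA)
      (posSemidef_sub_single_last_kronecker_lastSchurCompl hB)).submatrix e
  have hT := PosDef.kronecker_sub_kronecker (posDef_lastSchurCompl hA) (posDef_lastSchurCompl hB)
    (posSemidef_diagBlock_last_sub_lastSchurCompl hA)
    (posSemidef_diagBlock_last_sub_lastSchurCompl hB)
  rw [← det_submatrix_equiv_self e (khatriRao A B),
    khatriRao_eq_khatriRao_sub_add A B (Fin.last n) (lastSchurCompl A) (lastSchurCompl B),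
    submatrix_add, Pi.add_apply, Pi.add_apply, submatrix_lastBlockEquiv_single_last_kronecker,
    ← hK₁₁]
  exact hK.det_toBlocks₁₁_mul_det_le_det_add_fromBlocks
    (hK₁₁ ▸ posDef_khatriRao (posDef_leadBlock hA n n.le_succ) (posDef_leadBlock hB n n.le_succ))
    hT

end BlockMatrix

noncomputable def blockRatio {n p : ℕ} (A : Matrix (Fin n × Fin p) (Fin n × Fin p) ℂ)
    (μ : Fin n) : ℂ :=
  (diagBlock A μ).det * (leadBlock A μ.val μ.isLt.le).det / (leadBlock A (μ.val + 1) μ.isLt).det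

section BlockRatio

variable {n p q : ℕ}

theorem blockRatio_castSucc (A : Matrix (Fin (n + 1) × Fin p) (Fin (n + 1) × Fin p) ℂ)
    (ν : Fin n) : blockRatio A ν.castSucc = blockRatio (leadBlock A n n.le_succ) ν :=
  rfl

theorem blockRatio_last {A : Matrix (Fin (n + 1) × Fin p) (Fin (n + 1) × Fin p) ℂ}
    (hA : A.PosDef) :
    blockRatio A (Fin.last n) = (diagBlock A (Fin.last n)).det / (lastSchurCompl A).det := by
  have hA_self : leadBlock A (n + 1) le_rfl = A := rfl
  change (diagBlock A (Fin.last n)).det * (leadBlock A n n.le_succ).det /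
    (leadBlock A (n + 1) le_rfl).det = _
  rw [hA_self, det_eq_det_leadBlock_mul_det_lastSchurCompl hA, mul_comm (leadBlock A n _).det,
    mul_div_mul_right _ _ (posDef_leadBlock hA n n.le_succ).det_pos.ne']

theorem blockRatio_eq_one_of_val_eq_zero {A : Matrix (Fin n × Fin p) (Fin n × Fin p) ℂ}
    (hA : A.PosDef) {μ : Fin n} (hμ : μ.val = 0) : blockRatio A μ = 1 := by
  obtain ⟨k, hk⟩ := μ
  obtain rfl : k = 0 := hμ
  have h_one : leadBlock A 1 hk = (diagBlock A ⟨0, hk⟩).submatrix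
      (Equiv.uniqueProd (Fin p) (Fin 1)) (Equiv.uniqueProd (Fin p) (Fin 1)) := by
    ext ⟨i, a⟩ ⟨j, b⟩
    fin_cases i; fin_cases j
    rfl
  change (diagBlock A ⟨0, hk⟩).det * (leadBlock A 0 hk.le).det / (leadBlock A 1 hk).det = 1
  rw [h_one, det_submatrix_equiv_self, det_isEmpty (A := leadBlock A 0 hk.le), mul_one,
    div_self (posDef_diagBlock hA _).det_pos.ne']

theorem det_khatriRao_ge_prod_blockRatio :
    ∀ {n : ℕ} {A : Matrix (Fin n × Fin p) (Fin n × Fin p) ℂ}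
      {B : Matrix (Fin n × Fin q) (Fin n × Fin q) ℂ}, A.PosDef → B.PosDef →
    A.det ^ q * B.det ^ p * ∏ μ, (blockRatio A μ ^ q + blockRatio B μ ^ p - 1) ≤
      (khatriRao A B).det
  | 0, A, B, _, _ => by simp [det_isEmpty]
  | n + 1, A, B, hA, hB => by
    have hS := posDef_lastSchurCompl hA
    have hR := posDef_lastSchurCompl hB
    have hαS := posSemidef_diagBlock_last_sub_lastSchurCompl hA
    have hβR := posSemidef_diagBlock_last_sub_lastSchurCompl hB
    have hT := le_det_kronecker_sub_kronecker hS hR hαS hβR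
    simp only [Fintype.card_fin] at hT
    have hlast_nonneg : 0 ≤ (lastSchurCompl A).det ^ q * (lastSchurCompl B).det ^ p *
        (((diagBlock A (Fin.last n)).det / (lastSchurCompl A).det) ^ q +
          ((diagBlock B (Fin.last n)).det / (lastSchurCompl B).det) ^ p - 1) :=
      mul_nonneg (mul_nonneg (pow_nonneg hS.det_pos.le _) (pow_nonneg hR.det_pos.le _))
        (sub_nonneg.mpr (le_add_of_le_of_nonneg (one_le_pow₀ (hS.one_le_det_div_det hαS))
          (zero_le_one.trans (one_le_pow₀ (hR.one_le_det_div_det hβR)))))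
    have hlead := det_khatriRao_ge_prod_blockRatio (posDef_leadBlock hA n n.le_succ)
      (posDef_leadBlock hB n n.le_succ)
    calc _ = ((leadBlock A n n.le_succ).det ^ q * (leadBlock B n n.le_succ).det ^ p *
            ∏ ν : Fin n, (blockRatio (leadBlock A n n.le_succ) ν ^ q +
              blockRatio (leadBlock B n n.le_succ) ν ^ p - 1)) *
          ((lastSchurCompl A).det ^ q * (lastSchurCompl B).det ^ p *
            (((diagBlock A (Fin.last n)).det / (lastSchurCompl A).det) ^ q +
              ((diagBlock B (Fin.last n)).det / (lastSchurCompl B).det) ^ p - 1)) := by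
          rw [Fin.prod_univ_castSucc, blockRatio_last hA, blockRatio_last hB,
            det_eq_det_leadBlock_mul_det_lastSchurCompl hA,
            det_eq_det_leadBlock_mul_det_lastSchurCompl hB]
          simp only [blockRatio_castSucc]
          ring
      _ ≤ _ := mul_le_mul hlead hT hlast_nonneg (posDef_khatriRao (posDef_leadBlock hA n n.le_succ)
          (posDef_leadBlock hB n n.le_succ)).det_pos.le
      _ ≤ _ := det_khatriRao_leadBlock_mul_det_le hA hB

end BlockRatio

/-- `μ : Fin n` is `0`-indexed: `1 ≤ μ.val` is the paper's range `μ = 2, …, n`, and `A_{μ-1}`,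
`A_μ` are `leadBlock A μ.val _`, `leadBlock A (μ.val + 1) _`. -/
theorem khatriRao_det_ge {n p q : ℕ}
    (A : Matrix (Fin n × Fin p) (Fin n × Fin p) ℂ)
    (B : Matrix (Fin n × Fin q) (Fin n × Fin q) ℂ)
    (hA : A.PosDef) (hB : B.PosDef) :
    (khatriRao A B).det ≥
      A.det ^ q * B.det ^ p *
        ∏ μ ∈ Finset.univ.filter (fun μ : Fin n => 1 ≤ μ.val),
          (((diagBlock A μ).det * (leadBlock A μ.val μ.isLt.le).det /
                (leadBlock A (μ.val + 1) μ.isLt).det) ^ q +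
             ((diagBlock B μ).det * (leadBlock B μ.val μ.isLt.le).det /
                (leadBlock B (μ.val + 1) μ.isLt).det) ^ p - 1) := by
  rw [ge_iff_le, Finset.prod_filter_of_ne fun μ _ hμ => ?_]
  · exact det_khatriRao_ge_prod_blockRatio hA hB
  · contrapose! hμ
    change blockRatio A μ ^ q + blockRatio B μ ^ p - 1 = 1
    rw [blockRatio_eq_one_of_val_eq_zero hA (by omega),
      blockRatio_eq_one_of_val_eq_zero hB (by omega)]
    norm_num
end

section
/- Let m, n be positive integers and let a_μ^{(i)} be real numbers with a_μ^{(i)} ≥ 1 for all i = 1,…,m and μ = 1,…,n. Then ∏_{μ=1}^n ( ∑_{i=1}^m a_μ^{(i)} − (m−1) ) ≥ ∑_{i=1}^m ∏_{μ=1}^n a_μ^{(i)} − (m−1). -/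
private lemma key_step (m : ℕ) (x y : Fin m → ℝ) (hx : ∀ i, 1 ≤ x i)
    (hy : ∀ i, 1 ≤ y i) :
    ((∑ i, x i) - ((m : ℝ) - 1)) * ((∑ i, y i) - ((m : ℝ) - 1)) ≥
      (∑ i, x i * y i) - ((m : ℝ) - 1) := by
  set U := ∑ i, (x i - 1) with hU
  set V := ∑ i, (y i - 1) with hV
  have hsx : (∑ i, x i) = U + m := by
    simp [hU, Finset.sum_sub_distrib]
  have hsy : (∑ i, y i) = V + m := by
    simp [hV, Finset.sum_sub_distrib]
  have hxy : (∑ i, x i * y i) = (∑ i, (x i - 1) * (y i - 1)) + U + V + m := by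
    rw [hU, hV]
    rw [← Finset.sum_add_distrib, ← Finset.sum_add_distrib]
    have : ∀ i : Fin m, x i * y i = ((x i - 1) * (y i - 1) + (x i - 1)) + (y i - 1) + 1 := by
      intro i; ring
    rw [Finset.sum_congr rfl fun i _ => this i]
    simp [Finset.sum_add_distrib]
  have hkey : (∑ i, (x i - 1) * (y i - 1)) ≤ U * V := by
    calc (∑ i, (x i - 1) * (y i - 1)) ≤ ∑ i, (x i - 1) * V := by
          apply Finset.sum_le_sum
          intro i _
          apply mul_le_mul_of_nonneg_left _ (by show (0:ℝ) ≤ x i - 1; linarith [hx i])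
          exact Finset.single_le_sum (f := fun j => y j - 1) (fun j _ => by show (0:ℝ) ≤ y j - 1; linarith [hy j]) (Finset.mem_univ i)
      _ = U * V := by rw [hU, Finset.sum_mul]
  rw [hsx, hsy, hxy]
  nlinarith [hkey]

private lemma aux_prod {α : Type*} [DecidableEq α] (m : ℕ) (hm : 0 < m)
    (a : Fin m → α → ℝ) (ha : ∀ i μ, 1 ≤ a i μ) (s : Finset α) (hs : s.Nonempty) :
    ∏ μ ∈ s, ((∑ i, a i μ) - ((m : ℝ) - 1)) ≥
      (∑ i, ∏ μ ∈ s, a i μ) - ((m : ℝ) - 1) := by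
  induction hs using Finset.Nonempty.cons_induction with
  | singleton μ => simp
  | cons μ t hμ ht ih =>
    rw [Finset.prod_cons]
    have hP : ∀ i, 1 ≤ ∏ ν ∈ t, a i ν := by
      intro i
      have := Finset.prod_le_prod (s := t) (f := fun _ => (1:ℝ)) (g := fun ν => a i ν)
        (by norm_num) (fun ν _ => ha i ν)
      simpa using this
    have hsumP : (m : ℝ) ≤ ∑ i, ∏ ν ∈ t, a i ν := by
      calc (m : ℝ) = ∑ _i : Fin m, (1 : ℝ) := by simp
        _ ≤ _ := Finset.sum_le_sum fun i _ => hP i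
    have h1 : (1 : ℝ) ≤ (∑ i, ∏ ν ∈ t, a i ν) - ((m : ℝ) - 1) := by linarith
    have h2 : (1 : ℝ) ≤ (∑ i, a i μ) - ((m : ℝ) - 1) := by
      have : (m : ℝ) ≤ ∑ i, a i μ := by
        calc (m : ℝ) = ∑ _i : Fin m, (1 : ℝ) := by simp
          _ ≤ _ := Finset.sum_le_sum fun i _ => ha i μ
      linarith
    calc ((∑ i, a i μ) - ((m : ℝ) - 1)) * ∏ ν ∈ t, ((∑ i, a i ν) - ((m : ℝ) - 1))
        ≥ ((∑ i, a i μ) - ((m : ℝ) - 1)) *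
            ((∑ i, ∏ ν ∈ t, a i ν) - ((m : ℝ) - 1)) := by
          apply mul_le_mul_of_nonneg_left ih (by linarith)
      _ ≥ (∑ i, a i μ * ∏ ν ∈ t, a i ν) - ((m : ℝ) - 1) :=
          key_step m (fun i => a i μ) (fun i => ∏ ν ∈ t, a i ν)
            (fun i => ha i μ) hP
      _ = (∑ i, ∏ ν ∈ Finset.cons μ t hμ, a i ν) - ((m : ℝ) - 1) := by
          simp [Finset.prod_cons, Finset.prod_insert hμ]

/-- **Lemma 2.3 (numerical inequality).** If `a i μ ≥ 1` for all `i = 1,…,m` and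
`μ = 1,…,n`, then `∏_{μ} (∑_i a i μ - (m-1)) ≥ ∑_i ∏_μ a i μ - (m-1)`. -/
theorem prod_sum_sub_ge_sum_prod_sub (m n : ℕ) (hm : 0 < m) (hn : 0 < n)
    (a : Fin m → Fin n → ℝ) (ha : ∀ i μ, 1 ≤ a i μ) :
    ∏ μ : Fin n, ((∑ i : Fin m, a i μ) - ((m : ℝ) - 1)) ≥
      (∑ i : Fin m, ∏ μ : Fin n, a i μ) - ((m : ℝ) - 1) := by
  exact aux_prod m hm (fun i μ => a i μ) ha Finset.univ
    (Finset.univ_nonempty_iff.mpr (Fin.pos_iff_nonempty.mp hn))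
end
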